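/- Let b1, b2 > 0 and 0 ≤ w < 1. Then (1−w)·b2·Σ_{k=0}^∞ (b2+1)_k w^k/(b1+b2+1)_k + b1·Σ_{k=0}^∞ (b2)_k w^k/(b1+b2+1)_k = b1 + b2. (Equivalently, with M = 1−w: M·b2·₂F₁(1,b2+1; b1+b2+1; 1−M) + b1·₂F₁(1,b2; b1+b2+1; 1−M) = b1 + b2.) -/
import Mathlib


open Real

/-- Rising factorial (Pochhammer symbol) `(a)_k`. -/
noncomputable def poch (a : ℝ) (k : ℕ) : ℝ := (ascPochhammer ℝ k).eval a

lemma poch_zero' (a : ℝ) : poch a 0 = 1 := by simp [poch]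

lemma poch_succ' (a : ℝ) (k : ℕ) : poch a (k+1) = poch a k * (a + k) := by
  simp [poch, ascPochhammer_succ_right]

lemma poch_succ_left' (a : ℝ) (k : ℕ) : poch a (k+1) = a * poch (a+1) k := by
  simp [poch, ascPochhammer_succ_left, Polynomial.eval_comp]

lemma poch_pos' {a : ℝ} (ha : 0 < a) (k : ℕ) : 0 < poch a k := by
  induction k with
  | zero => simp [poch_zero']
  | succ n ih =>
    rw [poch_succ']
    have hn : (0:ℝ) ≤ (n:ℝ) := Nat.cast_nonneg n
    nlinarith

lemma poch_mono' {a b : ℝ} (ha : 0 < a) (hab : a ≤ b) (k : ℕ) : poch a k ≤ poch b k := by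
  induction k with
  | zero => simp [poch_zero']
  | succ n ih =>
    rw [poch_succ', poch_succ']
    have h1 := poch_pos' ha n
    have h2 := poch_pos' (ha.trans_le hab) n
    have hn : (0:ℝ) ≤ (n:ℝ) := Nat.cast_nonneg n
    nlinarith

lemma summable_term' {a c w : ℝ} (ha : 0 < a) (hac : a ≤ c) (hw0 : 0 ≤ w) (hw1 : w < 1) :
    Summable (fun k : ℕ => poch a k * w ^ k / poch c k) := by
  refine Summable.of_nonneg_of_le (fun k => ?_) (fun k => ?_)
    (summable_geometric_of_lt_one hw0 hw1)
  · have h1 := (poch_pos' ha k).le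
    have h2 := (poch_pos' (ha.trans_le hac) k).le
    have h3 := pow_nonneg hw0 k
    positivity
  · rw [div_le_iff₀ (poch_pos' (ha.trans_le hac) k)]
    have h1 := poch_mono' ha hac k
    have h3 := pow_nonneg hw0 k
    have h4 := (poch_pos' ha k).le
    nlinarith

/-- the contiguous relation
`M·b₂·₂F₁(1,b₂+1;b₁+b₂+1;1-M) + b₁·₂F₁(1,b₂;b₁+b₂+1;1-M) = b₁+b₂` with `M = 1-w`. -/
theorem twoF1_contiguous (b1 b2 w : ℝ) (hb1 : 0 < b1) (hb2 : 0 < b2)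
    (hw0 : 0 ≤ w) (hw1 : w < 1) :
    (1 - w) * b2 * ∑' k : ℕ, poch (b2 + 1) k * w ^ k / poch (b1 + b2 + 1) k +
      b1 * ∑' k : ℕ, poch b2 k * w ^ k / poch (b1 + b2 + 1) k = b1 + b2 := by
  set c := b1 + b2 + 1 with hc
  have hc0 : 0 < c := by rw [hc]; linarith
  set A : ℕ → ℝ := fun k => poch (b2 + 1) k * w ^ k / poch c k with hA
  set B : ℕ → ℝ := fun k => poch b2 k * w ^ k / poch c k with hB
  have hAs : Summable A := summable_term' (by linarith) (by rw [hc]; linarith) hw0 hw1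
  have hBs : Summable B := summable_term' hb2 (by rw [hc]; linarith) hw0 hw1
  set f : ℕ → ℝ := fun k => (b1 + b2 + k) * B k with hf
  have h1 : ∀ k : ℕ, b2 * A k = (b2 + k) * B k := by
    intro k
    have hck : poch c k ≠ 0 := (poch_pos' hc0 k).ne'
    have e : b2 * poch (b2 + 1) k = (b2 + k) * poch b2 k := by
      have := poch_succ_left' b2 k
      have := poch_succ' b2 k
      linarith
    simp only [hA, hB]
    field_simp
    linear_combination w ^ k * e
  have h2 : ∀ k : ℕ, f (k + 1) = w * (b2 * A k) := by
    intro k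
    have hck : poch c k ≠ 0 := (poch_pos' hc0 k).ne'
    have hcks : (0:ℝ) < c + k := by positivity
    have e1 : poch c (k+1) = poch c k * (c + k) := poch_succ' c k
    have e2 : poch b2 (k+1) = b2 * poch (b2+1) k := poch_succ_left' b2 k
    simp only [hf, hB, hA, e1, e2]
    have : (b1 + b2 + ((k:ℝ)+1)) = c + k := by rw [hc]; ring
    push_cast
    rw [this]
    field_simp
    ring
  have key : ∀ k : ℕ, (1 - w) * b2 * A k + b1 * B k = f k - f (k + 1) := by
    intro k
    have e1 := h1 k
    have e2 := h2 k
    simp only [hf]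
    linear_combination e1 + e2
  have hfs : Filter.Tendsto f Filter.atTop (nhds 0) := by
    have hA0 : Filter.Tendsto A Filter.atTop (nhds 0) := hAs.tendsto_atTop_zero
    have h' : Filter.Tendsto (fun k => f (k + 1)) Filter.atTop (nhds 0) := by
      simp only [h2]
      have := (hA0.const_mul b2).const_mul w
      simpa using this
    exact (Filter.tendsto_add_atTop_iff_nat 1).mp h'
  have hsum : HasSum (fun k => (1 - w) * b2 * A k + b1 * B k) (b1 + b2) := by
    have hS : Summable (fun k => (1 - w) * b2 * A k + b1 * B k) :=
      (hAs.mul_left _).add (hBs.mul_left _)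
    rw [hS.hasSum_iff_tendsto_nat]
    have hpart : ∀ n, ∑ i ∈ Finset.range n, ((1 - w) * b2 * A i + b1 * B i) = f 0 - f n := by
      intro n
      rw [← Finset.sum_range_sub' f n]
      exact Finset.sum_congr rfl fun i _ => key i
    simp only [hpart]
    have hf0 : f 0 = b1 + b2 := by simp [hf, hB, poch_zero']
    rw [hf0]
    simpa using tendsto_const_nhds.sub hfs
  have := hsum.tsum_eq
  rw [Summable.tsum_add (hAs.mul_left _) (hBs.mul_left _), tsum_mul_left, tsum_mul_left] at this
  exact this
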